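/- arXiv:2009.00124 — 3 statements merged into one kernel-verified Lean document; each statement's English description precedes it below -/
import Mathlib

section
/- The group homomorphism from the free group on two generators FreeGroup (Fin 2) to B₃ determined by sending the first generator to σ₁² and the second generator to σ₂² is injective; that is, σ₁² and σ₂² generate a free subgroup of rank 2 in B₃. -/
/-!
Sending `σ₁ ↦ T = [[1,1],[0,1]]` and `σ₂ ↦ U = S⁻¹TS = [[1,0],[-1,1]]` defines a homomorphism
`B₃ → SL(2,ℤ)`, so it suffices that `T²` and `U² = S⁻¹T²S` generate a free group. This is a
ping-pong on the upper half plane: `T^{±2}` throws `{Re z > -1}` into `{Re z ≥ 1}` and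
`{Re z < 1}` into `{Re z ≤ -1}`, and since `S z = -1/z` maps `{|Re z| ≥ 1}` into the strip
`{|Re z| < 1}`, the `S⁻¹`-translates of these sets serve as ping-pong sets for `U²`.
-/

/-- The braid relator `σ₁σ₂σ₁σ₂⁻¹σ₁⁻¹σ₂⁻¹` in the free group on two generators. -/
def braidRel3 : Set (FreeGroup (Fin 2)) :=
  {FreeGroup.of 0 * FreeGroup.of 1 * FreeGroup.of 0 *
    (FreeGroup.of 1)⁻¹ * (FreeGroup.of 0)⁻¹ * (FreeGroup.of 1)⁻¹}

/-- The Artin braid group on 3 strands. -/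
abbrev BraidGroup3 : Type := PresentedGroup braidRel3

/-- The standard generators σ₁, σ₂ of the braid group `B₃`. -/
def σ (i : Fin 2) : BraidGroup3 := PresentedGroup.of i

open Pointwise in
theorem FreeGroup.injective_lift_of_ping_pong_conj {G : Type} {α : Type*} [Group G]
    [MulAction G α] (a s : G) (X Y : Set α) (hXne : X.Nonempty) (hXY : Disjoint X Y)
    (hX : a • Yᶜ ⊆ X) (hY : a⁻¹ • Xᶜ ⊆ Y) (hs : Disjoint (X ∪ Y) (s⁻¹ • (X ∪ Y))) :
    Function.Injective (FreeGroup.lift ![a, s⁻¹ * a * s]) := by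
  have conj_smul (b : G) (Z : Set α) : (s⁻¹ * b * s) • (s⁻¹ • Z)ᶜ = s⁻¹ • b • Zᶜ := by
    rw [Set.smul_set_compl, smul_smul, smul_smul, mul_inv_cancel_right, ← Set.smul_set_compl]
  rw [Set.smul_set_union, Set.disjoint_union_left, Set.disjoint_union_right,
    Set.disjoint_union_right] at hs
  obtain ⟨⟨hXX, hXY'⟩, hYX, hYY⟩ := hs
  refine FreeGroup.injective_lift_of_ping_pong _ ![X, s⁻¹ • X] ![Y, s⁻¹ • Y] ?_ ?_ ?_ ?_ ?_ ?_
  · intro i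
    fin_cases i
    exacts [hXne, hXne.smul_set]
  · intro i j hij
    fin_cases i <;> fin_cases j
    exacts [absurd rfl hij, hXX, hXX.symm, absurd rfl hij]
  · intro i j hij
    fin_cases i <;> fin_cases j
    exacts [absurd rfl hij, hYY, hYY.symm, absurd rfl hij]
  · intro i j
    fin_cases i <;> fin_cases j
    exacts [hXY, hXY', hYX.symm, Set.disjoint_smul_set.2 hXY]
  · intro i
    fin_cases i
    · exact hX
    · change (s⁻¹ * a * s) • (s⁻¹ • Y)ᶜ ⊆ s⁻¹ • X
      rw [conj_smul]
      exact Set.smul_set_mono hX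
  · intro i
    fin_cases i
    · exact hY
    · change (s⁻¹ * a * s)⁻¹ • (s⁻¹ • X)ᶜ ⊆ s⁻¹ • Y
      rw [show (s⁻¹ * a * s)⁻¹ = s⁻¹ * a⁻¹ * s by group, conj_smul]
      exact Set.smul_set_mono hY

namespace ModularGroup

open UpperHalfPlane

lemma abs_re_S_smul_lt_one (z : ℍ) (hz : 1 ≤ |z.re|) : |(S • z).re| < 1 := by
  have hre : (S • z).re = -z.re / Complex.normSq (z : ℂ) := by
    rw [modular_S_smul]
    simp [Complex.inv_re, neg_div]
  have hnormSq : z.re ^ 2 < Complex.normSq (z : ℂ) := by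
    rw [Complex.normSq_apply, coe_re, coe_im]
    nlinarith [z.im_pos]
  have hpos : 0 < Complex.normSq (z : ℂ) := by linarith [sq_nonneg z.re]
  rw [hre, abs_div, abs_neg, abs_of_pos hpos, div_lt_one hpos]
  nlinarith [sq_abs z.re]

lemma braid_rel_T_conj_S : T * (S⁻¹ * T * S) * T = S⁻¹ * T * S * T * (S⁻¹ * T * S) := by
  ext i j
  fin_cases i <;> fin_cases j <;>
    simp [coe_S, coe_T, Matrix.SpecialLinearGroup.coe_inv, Matrix.adjugate_fin_two,
      Matrix.mul_apply, Fin.sum_univ_succ]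

end ModularGroup

namespace BraidGroup3

def lift {G : Type*} [Group G] (a b : G) (h : a * b * a = b * a * b) : BraidGroup3 →* G :=
  PresentedGroup.toGroup (f := ![a, b]) <| by
    rintro r rfl
    simp only [map_mul, map_inv, FreeGroup.lift_apply_of, Matrix.cons_val_zero,
      Matrix.cons_val_one]
    rw [h]
    group

@[simp]
lemma lift_σ {G : Type*} [Group G] (a b : G) (h : a * b * a = b * a * b) (i : Fin 2) :
    lift a b h (σ i) = ![a, b] i :=
  PresentedGroup.toGroup.of _

end BraidGroup3

open ModularGroup UpperHalfPlane in
lemma injective_lift_T_sq_conj_S :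
    Function.Injective (FreeGroup.lift ![T ^ 2, S⁻¹ * T ^ 2 * S]) := by
  have hT2 : T ^ 2 = T ^ (2 : ℤ) := rfl
  refine FreeGroup.injective_lift_of_ping_pong_conj _ S {z : ℍ | 1 ≤ z.re} {z | z.re ≤ -1}
    ⟨T • I, by simp only [Set.mem_ofPred_eq, re_T_smul, I_re, zero_add, le_refl]⟩ ?_ ?_ ?_ ?_
  · exact Set.disjoint_left.2 fun z (h₁ : 1 ≤ z.re) (h₂ : z.re ≤ -1) ↦ by linarith
  · rintro _ ⟨z, hz, rfl⟩
    simp only [Set.mem_compl_iff, Set.mem_ofPred_eq, not_le] at hz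
    simp only [Set.mem_ofPred_eq, hT2, re_T_zpow_smul z]
    push_cast; linarith
  · rintro _ ⟨z, hz, rfl⟩
    simp only [Set.mem_compl_iff, Set.mem_ofPred_eq, not_le] at hz
    simp only [Set.mem_ofPred_eq, hT2, ← zpow_neg, re_T_zpow_smul z]
    push_cast; linarith
  · refine Set.disjoint_left.2 fun z hz hSz ↦ ?_
    rw [Set.mem_inv_smul_set_iff] at hSz
    have hmem_union : ∀ w : ℍ, w ∈ {z : ℍ | 1 ≤ z.re} ∪ {z | z.re ≤ -1} ↔ 1 ≤ |w.re| := by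
      intro w; simp only [Set.mem_union, Set.mem_ofPred_eq, le_abs']; tauto
    rw [hmem_union] at hz hSz
    exact (abs_re_S_smul_lt_one z hz).not_ge hSz

open ModularGroup in
/-- `σ₁²` and `σ₂²` generate a free subgroup of rank 2 in `B₃`: the homomorphism
`F₂ → B₃` sending the free generators to `σ₁²` and `σ₂²` is injective. -/
theorem injective_freeGroup_to_braidGroup3 :
    Function.Injective (FreeGroup.lift ![σ 0 ^ 2, σ 1 ^ 2] : FreeGroup (Fin 2) →* BraidGroup3) := by
  let ρ := BraidGroup3.lift T (S⁻¹ * T * S) braid_rel_T_conj_S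
  have hρ : ρ.comp (FreeGroup.lift ![σ 0 ^ 2, σ 1 ^ 2]) =
      FreeGroup.lift ![T ^ 2, S⁻¹ * T ^ 2 * S] := by
    refine FreeGroup.ext_hom _ _ fun i ↦ ?_
    fin_cases i <;> simp [ρ, sq, mul_assoc]
  apply Function.Injective.of_comp (f := ρ)
  rw [← MonoidHom.coe_comp, hρ]
  exact injective_lift_T_sq_conj_S
end

section
/- The group homomorphism from FreeGroup (Fin 2) × ℤ to B₃ determined by sending the two free generators to σ₁² and σ₂² respectively and sending (1 : ℤ) to Δ² = (σ₁σ₂)³ is injective, and its range equals the pure braid group P₃ = ker π. In particular, P₃ is isomorphic to F₂ × ℤ. -/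
/-- The full twist Δ² = (σ₁σ₂)³. -/
def Δsq : BraidGroup3 := (σ 0 * σ 1) ^ 3

/-- The transpositions `(0 1)` and `(1 2)` in the symmetric group `S₃`. -/
def permGen : Fin 2 → Equiv.Perm (Fin 3) := ![Equiv.swap 0 1, Equiv.swap 1 2]

lemma permGen_rel : ∀ r ∈ braidRel3, FreeGroup.lift permGen r = 1 := by
  intro r hr
  rw [braidRel3, Set.mem_singleton_iff] at hr
  subst hr
  simp only [map_mul, map_inv, FreeGroup.lift_apply_of]
  decide

/-- The projection `π : B₃ → S₃` sending `σ₁ ↦ (0 1)` and `σ₂ ↦ (1 2)`. -/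
def πB3 : BraidGroup3 →* Equiv.Perm (Fin 3) := PresentedGroup.toGroup permGen_rel

/-!
Since `Δ² = (σ₁σ₂)³` is central, `(w, n) ↦ w(σ₁², σ₂²) · Δ²ⁿ` is a homomorphism `F₂ × ℤ → B₃`;
call its image `H`. Its generators are pure, so `H ≤ P₃`. Conversely, right multiplication by
`σ₁^{±1}` and `σ₂^{±1}` maps the union of the six cosets `H t`,
`t ∈ {1, σ₁, σ₂, σ₁σ₂, σ₂σ₁, σ₁σ₂σ₁}`, into itself, so every braid lies in one of them; as
`π t ≠ 1` for the five representatives `t ≠ 1`, a pure braid lies in `H · 1 = H`.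

For injectivity, `σ₁ ↦ [1 1; 0 1]`, `σ₂ ↦ [1 0; -1 1]` defines a representation of `B₃` in
`GL₂(ℚ)` sending `σ₁², σ₂²` to Sanov's matrices `[1 2; 0 1]`, `[1 0; -2 1]`, which generate a free
group by ping-pong on `ℚ ∪ {∞}`, and sending `Δ²` to `-1`. A relation `w(σ₁², σ₂²) = Δ²ⁿ` thus
gives `w² = 1`, hence `w = 1` as free groups are torsion free; and `Δ²` has infinite order, as its
exponent sum is `6`.
-/

open Set Matrix.GeneralLinearGroup OnePoint
open scoped Pointwise

section BraidRelation

variable {G : Type*} [Group G] {a b : G}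

lemma semiconjBy_of_braid (h : a * b * a = b * a * b) : SemiconjBy (a * b * a) a b := by
  calc a * b * a * a = b * a * b * a := by rw [h]
    _ = b * (a * b * a) := by group

lemma mul_pow_three_eq_sq_of_braid (h : a * b * a = b * a * b) :
    (a * b) ^ 3 = (a * b * a) ^ 2 := by
  calc (a * b) ^ 3 = a * b * a * (b * a * b) := by
        simp only [pow_succ, pow_zero, one_mul, mul_assoc]
    _ = (a * b * a) ^ 2 := by rw [← h, sq]

lemma mul_pow_three_eq_of_braid (h : a * b * a = b * a * b) :
    (a * b) ^ 3 = a ^ 2 * b * a ^ 2 * b := by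
  calc (a * b) ^ 3 = a * (b * a * b) * a * b := by
        simp only [pow_succ, pow_zero, one_mul, mul_assoc]
    _ = a ^ 2 * b * a ^ 2 * b := by simp only [← h, sq, mul_assoc]

lemma mul_pow_three_comm_of_braid (h : a * b * a = b * a * b) : (b * a) ^ 3 = (a * b) ^ 3 := by
  rw [mul_pow_three_eq_sq_of_braid h, mul_pow_three_eq_sq_of_braid h.symm, h]

lemma commute_mul_pow_three_of_braid (h : a * b * a = b * a * b) : Commute a ((a * b) ^ 3) := by
  have hb : SemiconjBy (a * b * a) b a := by
    simpa only [← h] using semiconjBy_of_braid h.symm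
  rw [mul_pow_three_eq_sq_of_braid h, sq]
  exact (hb.mul_left (semiconjBy_of_braid h)).symm

lemma commute_mul_pow_three_of_mem_closure (h : a * b * a = b * a * b) {g : G}
    (hg : g ∈ Subgroup.closure {a, b}) : Commute g ((a * b) ^ 3) := by
  have hΔ : (a * b) ^ 3 ∈ Subgroup.centralizer {a, b} := by
    rw [Subgroup.mem_centralizer_iff]
    rintro c (rfl | rfl)
    · exact commute_mul_pow_three_of_braid h
    · rw [← mul_pow_three_comm_of_braid h]
      exact commute_mul_pow_three_of_braid h.symm
  have hg' := Subgroup.closure_le_centralizer_centralizer _ hg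
  exact (Subgroup.mem_centralizer_iff.1 hg' _ hΔ).symm

lemma mul_mul_self_eq_of_braid (h : a * b * a = b * a * b) :
    b * a * a = (a ^ 2)⁻¹ * (a * b) ^ 3 * (b ^ 2)⁻¹ * b := by
  rw [mul_pow_three_eq_of_braid h]
  simp [sq, mul_assoc]

lemma mul_mul_mul_self_eq_of_braid (h : a * b * a = b * a * b) :
    a * b * a * a = b ^ 2 * (a * b) := by
  rw [(semiconjBy_of_braid h).eq, h]
  simp [sq, mul_assoc]

end BraidRelation

section CosetReps

variable {G : Type*} [Group G]

lemma mul_inv_eq_inv_mul_of_mul_eq {t c r t' : G} (e : t * c = r * t') : t' * c⁻¹ = r⁻¹ * t := by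
  rw [mul_inv_eq_iff_eq_mul, mul_assoc, e, inv_mul_cancel_left]

lemma mul_mem_mul_of_forall_mul_mem {H : Subgroup G} {T : Set G} {c g : G}
    (hc : ∀ t ∈ T, t * c ∈ (H : Set G) * T) (hg : g ∈ (H : Set G) * T) :
    g * c ∈ (H : Set G) * T := by
  obtain ⟨r, hr, t, ht, rfl⟩ := hg
  obtain ⟨r', hr', t', ht', htc⟩ := hc t ht
  refine ⟨r * r', H.mul_mem hr hr', t', ht', ?_⟩
  simp only [mul_assoc] at htc ⊢
  rw [htc]

def braidCosetReps (a b : G) : Set G := {1, a, b, a * b, b * a, a * b * a}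

variable {a b : G} {H : Subgroup G}

lemma braidCosetReps_comm (h : a * b * a = b * a * b) :
    braidCosetReps b a = braidCosetReps a b := by
  ext
  simp only [braidCosetReps, ← h, mem_insert_iff, mem_singleton_iff]
  tauto

lemma forall_mul_mem_mul_braidCosetReps (h : a * b * a = b * a * b) (ha : a ^ 2 ∈ H)
    (hb : b ^ 2 ∈ H) (hΔ : (a * b) ^ 3 ∈ H) :
    ∀ t ∈ braidCosetReps a b, t * a ∈ (H : Set G) * braidCosetReps a b := by
  have hR : (a ^ 2)⁻¹ * (a * b) ^ 3 * (b ^ 2)⁻¹ ∈ H :=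
    H.mul_mem (H.mul_mem (H.inv_mem ha) hΔ) (H.inv_mem hb)
  simp only [braidCosetReps, forall_mem_insert, forall_eq, mem_singleton_iff]
  exact ⟨⟨1, H.one_mem, a, by simp, by simp⟩,
    ⟨a ^ 2, ha, 1, by simp, by simp [sq]⟩,
    ⟨1, H.one_mem, b * a, by simp, by simp⟩,
    ⟨1, H.one_mem, a * b * a, by simp, by simp⟩,
    ⟨_, hR, b, by simp, (mul_mul_self_eq_of_braid h).symm⟩,
    ⟨_, hb, a * b, by simp, (mul_mul_mul_self_eq_of_braid h).symm⟩⟩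

lemma forall_mul_inv_mem_mul_braidCosetReps (h : a * b * a = b * a * b) (ha : a ^ 2 ∈ H)
    (hb : b ^ 2 ∈ H) (hΔ : (a * b) ^ 3 ∈ H) :
    ∀ t ∈ braidCosetReps a b, t * a⁻¹ ∈ (H : Set G) * braidCosetReps a b := by
  have hR : (a ^ 2)⁻¹ * (a * b) ^ 3 * (b ^ 2)⁻¹ ∈ H :=
    H.mul_mem (H.mul_mem (H.inv_mem ha) hΔ) (H.inv_mem hb)
  simp only [braidCosetReps, forall_mem_insert, forall_eq, mem_singleton_iff]
  exact ⟨⟨_, H.inv_mem ha, a, by simp,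
      (mul_inv_eq_inv_mul_of_mul_eq (by simp [sq] : a * a = a ^ 2 * 1)).symm⟩,
    ⟨1, H.one_mem, 1, by simp, by simp⟩,
    ⟨_, H.inv_mem hR, b * a, by simp,
      (mul_inv_eq_inv_mul_of_mul_eq (mul_mul_self_eq_of_braid h)).symm⟩,
    ⟨_, H.inv_mem hb, a * b * a, by simp,
      (mul_inv_eq_inv_mul_of_mul_eq (mul_mul_mul_self_eq_of_braid h)).symm⟩,
    ⟨1, H.one_mem, b, by simp, by simp⟩,
    ⟨1, H.one_mem, a * b, by simp, by simp⟩⟩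

theorem closure_subset_mul_braidCosetReps (h : a * b * a = b * a * b) (ha : a ^ 2 ∈ H)
    (hb : b ^ 2 ∈ H) (hΔ : (a * b) ^ 3 ∈ H) :
    (Subgroup.closure {a, b} : Set G) ⊆ (H : Set G) * braidCosetReps a b := by
  have hΔ' : (b * a) ^ 3 ∈ H := by rwa [mul_pow_three_comm_of_braid h]
  have key : ∀ c ∈ ({a, b} : Set G),
      (∀ t ∈ braidCosetReps a b, t * c ∈ (H : Set G) * braidCosetReps a b) ∧
      (∀ t ∈ braidCosetReps a b, t * c⁻¹ ∈ (H : Set G) * braidCosetReps a b) := by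
    rintro c (rfl | rfl)
    · exact ⟨forall_mul_mem_mul_braidCosetReps h ha hb hΔ,
        forall_mul_inv_mem_mul_braidCosetReps h ha hb hΔ⟩
    · rw [← braidCosetReps_comm h]
      exact ⟨forall_mul_mem_mul_braidCosetReps h.symm hb ha hΔ',
        forall_mul_inv_mem_mul_braidCosetReps h.symm hb ha hΔ'⟩
  intro g hg
  induction hg using Subgroup.closure_induction_right with
  | one => exact ⟨1, H.one_mem, 1, by simp [braidCosetReps], one_mul 1⟩
  | mul_right _ _ c hc ih => exact mul_mem_mul_of_forall_mul_mem (key c hc).1 ih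
  | mul_inv_cancel _ _ c hc ih => exact mul_mem_mul_of_forall_mul_mem (key c hc).2 ih

end CosetReps

namespace Matrix.GeneralLinearGroup

variable {R : Type*} [Ring R]

@[simps apply]
def lowerLeftHom : AddChar R (GL (Fin 2) R) where
  toFun x := ⟨!![1, 0; x, 1], !![1, 0; -x, 1], by simp [one_fin_two], by simp [one_fin_two]⟩
  map_zero_eq_one' := by simp [Units.ext_iff, one_fin_two]
  map_add_eq_mul' a b := by simp [Units.ext_iff, add_comm]

end Matrix.GeneralLinearGroup

section PingPong

variable {K : Type} [Field K] [DecidableEq K]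

lemma upperRightHom_smul_coe (x t : K) : upperRightHom x • (t : OnePoint K) = ↑(t + x) := by
  simp [smul_some_eq_ite]

lemma lowerLeftHom_smul_infty {x : K} (hx : x ≠ 0) : lowerLeftHom x • (∞ : OnePoint K) = ↑x⁻¹ := by
  simp [smul_infty_eq_ite, hx]

lemma lowerLeftHom_smul_coe {x t : K} (h : x * t + 1 ≠ 0) :
    lowerLeftHom x • (t : OnePoint K) = ↑(t / (x * t + 1)) := by
  simp [smul_some_eq_ite, h]

variable [LinearOrder K] [IsStrictOrderedRing K]

/-- The ping-pong sets are the arcs `(1, ∞]`, `(-1, 0]` and `(-∞, -1]`, `(0, 1]` of `K ∪ {∞}`: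
`t ↦ t + 2` and `t ↦ t / (1 - 2t)` map the complement of `sanovY i` into `sanovX i`. -/
def sanovX : Fin 2 → Set (OnePoint K) :=
  ![insert ∞ (OnePoint.some '' Ioi 1), OnePoint.some '' Ioc (-1) 0]

def sanovY : Fin 2 → Set (OnePoint K) :=
  ![OnePoint.some '' Iic (-1), OnePoint.some '' Ioc 0 1]

lemma upperRightHom_two_smul_mem_sanovX {p : OnePoint K} (hp : p ∉ sanovY 0) :
    upperRightHom (2 : K) • p ∈ sanovX 0 := by
  induction p using OnePoint.rec with
  | infty => simp [sanovX, smul_infty_eq_ite]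
  | coe t =>
    have ht : -1 < t := by simpa [sanovY] using hp
    rw [upperRightHom_smul_coe]
    exact mem_insert_of_mem _ (mem_image_of_mem _ (by simp only [mem_Ioi]; linarith))

lemma upperRightHom_neg_two_smul_mem_sanovY {p : OnePoint K} (hp : p ∉ sanovX 0) :
    upperRightHom (-2 : K) • p ∈ sanovY 0 := by
  induction p using OnePoint.rec with
  | infty => simp [sanovX] at hp
  | coe t =>
    have ht : t ≤ 1 := by simpa [sanovX] using hp
    rw [upperRightHom_smul_coe]
    exact mem_image_of_mem _ (by simp only [mem_Iic]; linarith)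

lemma lowerLeftHom_neg_two_smul_mem_sanovX {p : OnePoint K} (hp : p ∉ sanovY 1) :
    lowerLeftHom (-2 : K) • p ∈ sanovX 1 := by
  induction p using OnePoint.rec with
  | infty =>
    rw [lowerLeftHom_smul_infty (by norm_num)]
    exact mem_image_of_mem _ ⟨by norm_num, by norm_num⟩
  | coe t =>
    have ht : 0 < t → 1 < t := by simpa [sanovY] using hp
    obtain h | h := le_or_gt t 0
    · have hd : 0 < -2 * t + 1 := by linarith
      rw [lowerLeftHom_smul_coe hd.ne']
      refine mem_image_of_mem _ ⟨?_, div_nonpos_of_nonpos_of_nonneg h hd.le⟩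
      rw [lt_div_iff₀ hd]
      linarith
    · have hd : -2 * t + 1 < 0 := by linarith [ht h]
      rw [lowerLeftHom_smul_coe hd.ne]
      refine mem_image_of_mem _ ⟨?_, div_nonpos_of_nonneg_of_nonpos h.le hd.le⟩
      rw [lt_div_iff_of_neg hd]
      linarith [ht h]

lemma lowerLeftHom_two_smul_mem_sanovY {p : OnePoint K} (hp : p ∉ sanovX 1) :
    lowerLeftHom (2 : K) • p ∈ sanovY 1 := by
  induction p using OnePoint.rec with
  | infty =>
    rw [lowerLeftHom_smul_infty (by norm_num)]
    exact mem_image_of_mem _ ⟨by norm_num, by norm_num⟩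
  | coe t =>
    have ht : -1 < t → 0 < t := by simpa [sanovX] using hp
    obtain h | h := le_or_gt t (-1)
    · have hd : 2 * t + 1 < 0 := by linarith
      rw [lowerLeftHom_smul_coe hd.ne]
      refine mem_image_of_mem _ ⟨div_pos_of_neg_of_neg (by linarith) hd, ?_⟩
      rw [div_le_iff_of_neg hd]
      linarith
    · have hd : 0 < 2 * t + 1 := by linarith [ht h]
      rw [lowerLeftHom_smul_coe hd.ne']
      refine mem_image_of_mem _ ⟨div_pos (ht h) hd, ?_⟩
      rw [div_le_iff₀ hd]
      linarith [ht h]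

theorem injective_lift_upperRightHom_lowerLeftHom :
    Function.Injective (FreeGroup.lift ![upperRightHom (2 : K), lowerLeftHom (-2)]) := by
  refine FreeGroup.injective_lift_of_ping_pong _ (sanovX (K := K)) sanovY ?_ ?_ ?_ ?_ ?_ ?_
  · intro i
    fin_cases i
    exacts [⟨∞, by simp [sanovX]⟩, ⟨(0 : K), by simp [sanovX]⟩]
  · intro i j hij
    rw [Function.onFun, Set.disjoint_left]
    intro p hp hq
    fin_cases i <;> fin_cases j <;> induction p using OnePoint.rec <;> simp_all [sanovX] <;>
      linarith
  · intro i j hij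
    rw [Function.onFun, Set.disjoint_left]
    intro p hp hq
    fin_cases i <;> fin_cases j <;> induction p using OnePoint.rec <;> simp_all [sanovY] <;>
      linarith
  · intro i j
    rw [Set.disjoint_left]
    intro p hp hq
    fin_cases i <;> fin_cases j <;> induction p using OnePoint.rec <;> simp_all [sanovX, sanovY] <;>
      linarith
  · intro i
    fin_cases i <;> rintro _ ⟨p, hp, rfl⟩
    exacts [upperRightHom_two_smul_mem_sanovX hp, lowerLeftHom_neg_two_smul_mem_sanovX hp]
  · intro i
    fin_cases i <;> rintro _ ⟨p, hp, rfl⟩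
    exacts [by simpa using upperRightHom_neg_two_smul_mem_sanovY hp,
      by simpa using lowerLeftHom_two_smul_mem_sanovY hp]

end PingPong

section BraidGroup3

lemma σ_braid : σ 0 * σ 1 * σ 0 = σ 1 * σ 0 * σ 1 := by
  have h : σ 0 * σ 1 * σ 0 * (σ 1)⁻¹ * (σ 0)⁻¹ * (σ 1)⁻¹ = 1 :=
    PresentedGroup.one_of_mem (mem_singleton _)
  exact mul_inv_eq_one.1 (by rw [← h]; group)

lemma closure_σ : Subgroup.closure {σ 0, σ 1} = ⊤ := by
  rw [← PresentedGroup.closure_range_of]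
  congr
  ext
  simp [σ, Fin.exists_fin_two, eq_comm]

lemma commute_Δsq (g : BraidGroup3) : Commute g Δsq :=
  commute_mul_pow_three_of_mem_closure σ_braid (closure_σ ▸ Subgroup.mem_top g)

def braidGroup3Lift {G : Type*} [Group G] (a b : G) (h : a * b * a = b * a * b) :
    BraidGroup3 →* G :=
  PresentedGroup.toGroup (f := ![a, b]) <| by
    rintro _ rfl
    simp [h]

@[simp]
lemma braidGroup3Lift_σ {G : Type*} [Group G] {a b : G} (h : a * b * a = b * a * b) (i : Fin 2) :
    braidGroup3Lift a b h (σ i) = ![a, b] i :=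
  PresentedGroup.toGroup.of _

@[simp]
lemma πB3_σ (i : Fin 2) : πB3 (σ i) = permGen i :=
  PresentedGroup.toGroup.of _

def braidGroup3ToGL (R : Type*) [Ring R] : BraidGroup3 →* GL (Fin 2) R :=
  braidGroup3Lift (upperRightHom 1) (lowerLeftHom (-1)) <| by
    ext i j
    fin_cases i <;> fin_cases j <;> simp

lemma braidGroup3ToGL_Δsq (R : Type*) [Ring R] : braidGroup3ToGL R Δsq = -1 := by
  ext i j
  fin_cases i <;> fin_cases j <;> simp [braidGroup3ToGL, Δsq, pow_succ]

lemma braidGroup3ToGL_comp_lift_sq (R : Type*) [Ring R] :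
    (braidGroup3ToGL R).comp (FreeGroup.lift fun i ↦ σ i ^ 2) =
      FreeGroup.lift ![upperRightHom 2, lowerLeftHom (-2)] := by
  refine FreeGroup.ext_hom _ _ fun i ↦ ?_
  fin_cases i <;> ext j k <;> fin_cases j <;> fin_cases k <;> simp [braidGroup3ToGL, sq] <;>
    norm_num

def braidExponentSum : BraidGroup3 →* Multiplicative ℤ :=
  braidGroup3Lift (.ofAdd 1) (.ofAdd 1) rfl

lemma braidExponentSum_Δsq : braidExponentSum Δsq = .ofAdd 6 := by
  simp only [Δsq, map_pow, map_mul, braidExponentSum, braidGroup3Lift_σ]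
  rfl

end BraidGroup3

section PureBraid

def pureBraidHom : FreeGroup (Fin 2) × Multiplicative ℤ →* BraidGroup3 :=
  (FreeGroup.lift fun i ↦ σ i ^ 2).noncommCoprod (zpowersHom _ Δsq)
    fun _ n ↦ show Commute _ (zpowersHom _ Δsq n) from (commute_Δsq _).zpow_right _

@[simp]
lemma pureBraidHom_apply (w : FreeGroup (Fin 2)) (n : Multiplicative ℤ) :
    pureBraidHom (w, n) = FreeGroup.lift (fun i ↦ σ i ^ 2) w * Δsq ^ n.toAdd :=
  rfl

lemma injective_lift_σ_sq : Function.Injective (FreeGroup.lift fun i ↦ σ i ^ 2) := by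
  have h := injective_lift_upperRightHom_lowerLeftHom (K := ℚ)
  rw [← braidGroup3ToGL_comp_lift_sq, MonoidHom.coe_comp] at h
  exact h.of_comp

lemma injective_zpowersHom_Δsq : Function.Injective (zpowersHom BraidGroup3 Δsq) := by
  intro m n hmn
  simpa [braidExponentSum_Δsq] using congrArg (Multiplicative.toAdd ∘ braidExponentSum) hmn

lemma disjoint_range_lift_σ_sq_zpowers_Δsq :
    Disjoint (FreeGroup.lift fun i ↦ σ i ^ 2).range (Subgroup.zpowers Δsq) := by
  rw [Subgroup.disjoint_def]
  rintro _ ⟨w, rfl⟩ ⟨n, hn⟩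
  have hρ : FreeGroup.lift ![upperRightHom (2 : ℚ), lowerLeftHom (-2)] w = (-1) ^ n := by
    rw [← braidGroup3ToGL_comp_lift_sq, MonoidHom.comp_apply, ← hn]
    simp [braidGroup3ToGL_Δsq]
  have hw : w ^ 2 = 1 := injective_lift_upperRightHom_lowerLeftHom (K := ℚ) <| by
    rw [map_pow, hρ, map_one, ← zpow_natCast, ← zpow_mul, Even.neg_one_zpow (by simp)]
  rw [sq_eq_one.1 hw, map_one]

lemma injective_pureBraidHom : Function.Injective pureBraidHom :=
  (MonoidHom.noncommCoprod_injective _ _ _).2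
    ⟨injective_lift_σ_sq, injective_zpowersHom_Δsq, disjoint_range_lift_σ_sq_zpowers_Δsq⟩

lemma range_pureBraidHom_le_ker : pureBraidHom.range ≤ πB3.ker := by
  rw [pureBraidHom, MonoidHom.noncommCoprod_range, sup_le_iff, FreeGroup.range_lift_eq_closure,
    Subgroup.range_zpowersHom, Subgroup.closure_le, Subgroup.zpowers_le, MonoidHom.mem_ker]
  refine ⟨?_, by simp only [Δsq, map_pow, map_mul, πB3_σ]; decide⟩
  rintro _ ⟨i, rfl⟩
  fin_cases i <;> simp [permGen, sq]

lemma eq_one_of_mem_braidCosetReps {t : BraidGroup3} (ht : t ∈ braidCosetReps (σ 0) (σ 1))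
    (hπ : πB3 t = 1) : t = 1 := by
  simp only [braidCosetReps, mem_insert_iff, mem_singleton_iff] at ht
  rcases ht with rfl | rfl | rfl | rfl | rfl | rfl
  · rfl
  all_goals
    simp only [map_mul, πB3_σ] at hπ
    exact absurd hπ (by decide)

lemma ker_le_range_pureBraidHom : πB3.ker ≤ pureBraidHom.range := by
  intro g hg
  obtain ⟨r, hr, t, ht, rfl⟩ := Set.mem_mul.1 <|
    closure_subset_mul_braidCosetReps (H := pureBraidHom.range) σ_braid
      ⟨(.of 0, 1), by simp⟩ ⟨(.of 1, 1), by simp⟩ ⟨(1, .ofAdd 1), by simp [Δsq]⟩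
      (closure_σ ▸ Subgroup.mem_top g)
  have hπ : πB3 t = 1 := by
    rwa [MonoidHom.mem_ker, map_mul, MonoidHom.mem_ker.1 (range_pureBraidHom_le_ker hr),
      one_mul] at hg
  rwa [eq_one_of_mem_braidCosetReps ht hπ, mul_one]

end PureBraid

/-- The homomorphism `F₂ × ℤ → B₃` sending the free generators to `σ₁²`, `σ₂²` and
`1 ∈ ℤ` to `Δ²` is injective with image the pure braid group `P₃ = ker π`.
In particular `P₃ ≅ F₂ × ℤ`. -/
theorem pureBraidGroup3_iso_f2_prod_int :
    ∃ φ : FreeGroup (Fin 2) × Multiplicative ℤ →* BraidGroup3,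
      φ (FreeGroup.of 0, 1) = σ 0 ^ 2 ∧
      φ (FreeGroup.of 1, 1) = σ 1 ^ 2 ∧
      φ (1, Multiplicative.ofAdd 1) = Δsq ∧
      Function.Injective φ ∧ φ.range = πB3.ker :=
  ⟨pureBraidHom, by simp, by simp, by simp,
    injective_pureBraidHom, le_antisymm range_pureBraidHom_le_ker ker_le_range_pureBraidHom⟩
end

section
/- The center of the pure braid group P₃ = ker π, regarded as a group in its own right, is the cyclic subgroup generated by Δ² = (σ₁σ₂)³ (viewed as an element of P₃). -/
lemma Δsq_mem_ker : Δsq ∈ πB3.ker := by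
  rw [MonoidHom.mem_ker]
  simp only [Δsq, σ, πB3, map_pow, map_mul, PresentedGroup.toGroup.of]
  decide

open Subgroup Pointwise

lemma Subgroup.normal_of_le_center {G : Type*} [Group G] {H : Subgroup G} (h : H ≤ center G) :
    H.Normal :=
  ⟨fun x hx g => by rw [mem_center_iff.mp (h hx) g, mul_inv_cancel_right]; exact hx⟩

section PingPong

variable {G α : Type*} [Group G]

lemma exists_pow_eq_of_mem_zpowers {g x : G} {n : ℕ} (hn : 0 < n) (hg : g ^ n = 1)
    (hx : x ∈ zpowers g) : ∃ k < n, g ^ k = x := by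
  classical
  have hfin : IsOfFinOrder g := isOfFinOrder_iff_pow_eq_one.mpr ⟨n, hn, hg⟩
  obtain ⟨k, hk, rfl⟩ := Finset.mem_image.mp (hfin.mem_zpowers_iff_mem_range_orderOf.mp hx)
  exact ⟨k, (Finset.mem_range.mp hk).trans_le (orderOf_le_of_pow_eq_one hn hg), rfl⟩

lemma ne_one_of_mapsTo {φ : G →* Equiv.Perm α} {g : G} {X Y : Set α} (hX : X.Nonempty)
    (hXY : Disjoint X Y) (hg : Set.MapsTo (φ g) X Y) : g ≠ 1 := by
  rintro rfl
  obtain ⟨x, hx⟩ := hX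
  exact Set.disjoint_left.mp hXY hx (by simpa using hg hx)

lemma smul_subset_of_mem_zpowers {φ : G →* Equiv.Perm α} {g : G} {n : ℕ} (hn : 0 < n)
    (hg : g ^ n = 1) {X Y : Set α} (hXY : ∀ k, 0 < k → k < n → Set.MapsTo (φ (g ^ k)) X Y)
    (h : zpowers g) (hne : h ≠ 1) : φ h • X ⊆ Y := by
  obtain ⟨k, hk, hgk⟩ := exists_pow_eq_of_mem_zpowers hn hg h.2
  have hk0 : k ≠ 0 := by
    rintro rfl
    exact hne (Subtype.ext (by simpa using hgk.symm))
  rw [← hgk]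
  exact (hXY k (Nat.pos_of_ne_zero hk0) hk).image_subset

/-- If `a` and `b` generate `G`, the free product `⟨a⟩ * ⟨b⟩` maps onto `G`, and ping-pong makes
its composite with `φ` injective. -/
theorem MonoidHom.injective_of_ping_pong (φ : G →* Equiv.Perm α) {a b : G} {m n : ℕ}
    (hm : 0 < m) (hn : 3 ≤ n) (ha : a ^ m = 1) (hb : b ^ n = 1) (hab : closure {a, b} = ⊤)
    {X Y : Set α} (hX : X.Nonempty) (hY : Y.Nonempty) (hXY : Disjoint X Y)
    (haY : ∀ k, 0 < k → k < m → Set.MapsTo (φ (a ^ k)) Y X)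
    (hbX : ∀ k, 0 < k → k < n → Set.MapsTo (φ (b ^ k)) X Y) :
    Function.Injective φ := by
  let gen : Fin 2 → G := ![a, b]
  let ψ : Monoid.CoprodI (fun i => zpowers (gen i)) →* G :=
    Monoid.CoprodI.lift fun i => (zpowers (gen i)).subtype
  have hψ : Function.Surjective ψ := by
    rw [← MonoidHom.range_eq_top, eq_top_iff, ← hab, closure_le, Set.insert_subset_iff,
      Set.singleton_subset_iff]
    exact ⟨⟨Monoid.CoprodI.of (i := 0) ⟨a, mem_zpowers a⟩, Monoid.CoprodI.lift_of _ _⟩,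
      ⟨Monoid.CoprodI.of (i := 1) ⟨b, mem_zpowers b⟩, Monoid.CoprodI.lift_of _ _⟩⟩
  have hb_order : orderOf b = n := (orderOf_eq_iff (by omega)).mpr
    ⟨hb, fun k hk hk0 => ne_one_of_mapsTo hX hXY (hbX k hk0 hk)⟩
  have hcard : 3 ≤ Cardinal.mk (zpowers (gen 1)) := by
    have : Finite (zpowers b) :=
      (isOfFinOrder_iff_pow_eq_one.mpr ⟨n, by omega, hb⟩).finite_zpowers
    rw [show gen 1 = b from rfl, ← Nat.cast_card, Nat.card_zpowers, hb_order]
    exact_mod_cast hn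
  have hinj := Monoid.CoprodI.lift_injective_of_ping_pong
    (fun i => φ.comp (zpowers (gen i)).subtype) (Or.inr ⟨1, hcard⟩) ![X, Y]
    (by intro i; fin_cases i <;> assumption)
    (by
      intro i j hij
      fin_cases i <;> fin_cases j
      · exact absurd rfl hij
      · exact hXY
      · exact hXY.symm
      · exact absurd rfl hij)
    (by
      intro i j hij
      fin_cases i <;> fin_cases j
      · exact absurd rfl hij
      · exact smul_subset_of_mem_zpowers hm ha haY
      · exact smul_subset_of_mem_zpowers (by omega) hb hbX
      · exact absurd rfl hij)
  have hcomp : Monoid.CoprodI.lift (fun i => φ.comp (zpowers (gen i)).subtype) = φ.comp ψ :=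
    Monoid.CoprodI.ext_hom _ _ fun i => by ext; simp [ψ]
  rw [hcomp, MonoidHom.coe_comp] at hinj
  exact hinj.of_comp_right hψ

end PingPong

open MatrixGroups in
lemma ModularGroup.re_smul_eq (g : SL(2, ℤ)) (z : UpperHalfPlane) :
    (g • z).re = (((g 0 0 : ℝ) * z.re + g 0 1) * (g 1 0 * z.re + g 1 1) +
      g 0 0 * g 1 0 * z.im ^ 2) / Complex.normSq (UpperHalfPlane.denom g z) := by
  rw [ModularGroup.sl_moeb, UpperHalfPlane.re_smul, Complex.div_re]
  simp only [UpperHalfPlane.num, UpperHalfPlane.denom, Fin.isValue,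
    Matrix.SpecialLinearGroup.coe_GL_coe_matrix, Matrix.SpecialLinearGroup.map_apply_coe,
    RingHom.mapMatrix_apply, Int.coe_castRingHom, Matrix.map_apply, Complex.ofReal_intCast,
    Complex.add_re, Complex.mul_re, Complex.intCast_re, UpperHalfPlane.coe_re, Complex.intCast_im,
    UpperHalfPlane.coe_im, zero_mul, sub_zero, Complex.add_im, Complex.mul_im, add_zero]
  ring

namespace BraidGroup3

open MatrixGroups ModularGroup
open scoped UpperHalfPlane

lemma σ_braid : σ 0 * σ 1 * σ 0 = σ 1 * σ 0 * σ 1 :=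
  PresentedGroup.mk_eq_mk_of_mul_inv_mem (by simp [braidRel3, mul_assoc])

/-- The half twist `Δ = σ₁σ₂σ₁`. -/
def Δ : BraidGroup3 := σ 0 * σ 1 * σ 0

lemma Δsq_eq_Δ_sq : Δsq = Δ ^ 2 :=
  calc Δsq = σ 0 * σ 1 * σ 0 * (σ 1 * σ 0 * σ 1) := by rw [Δsq, pow_three]; simp only [mul_assoc]
    _ = Δ ^ 2 := by rw [← σ_braid, Δ, pow_two]

lemma Δ_mul_σ (i : Fin 2) : Δ * σ i = σ i.rev * Δ := by
  fin_cases i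
  · calc Δ * σ 0 = σ 1 * σ 0 * σ 1 * σ 0 := by rw [Δ, σ_braid]
      _ = σ 1 * Δ := by rw [Δ]; group
  · calc Δ * σ 1 = σ 0 * (σ 1 * σ 0 * σ 1) := by rw [Δ]; group
      _ = σ 0 * Δ := by rw [Δ, σ_braid]

lemma commute_Δsq_σ (i : Fin 2) : Commute Δsq (σ i) :=
  calc Δsq * σ i = Δ * (Δ * σ i) := by rw [Δsq_eq_Δ_sq, pow_two, mul_assoc]
    _ = σ i * Δsq := by
      rw [Δ_mul_σ, ← mul_assoc, Δ_mul_σ, Fin.rev_rev, mul_assoc, Δsq_eq_Δ_sq, pow_two]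

lemma Δsq_mem_center : Δsq ∈ center BraidGroup3 := by
  have hσ (i : Fin 2) : σ i ∈ centralizer {Δsq} :=
    mem_centralizer_singleton_iff.mpr (commute_Δsq_σ i).eq.symm
  exact mem_center_iff.mpr fun g => mem_centralizer_singleton_iff.mp
    (PresentedGroup.generated_by _ _ hσ g)

lemma σ_sq_mem_ker (i : Fin 2) : σ i ^ 2 ∈ πB3.ker := by
  rw [MonoidHom.mem_ker, map_pow, σ, πB3, PresentedGroup.toGroup.of]
  fin_cases i <;> simp [permGen, pow_two]

def L : SL(2, ℤ) := ⟨!![1, 0; -1, 1], by simp [Matrix.det_fin_two]⟩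

lemma coe_L : (L : Matrix (Fin 2) (Fin 2) ℤ) = !![1, 0; -1, 1] := rfl

lemma T_mul_L_mul_T : T * L * T = L * T * L := by
  ext i j; fin_cases i <;> fin_cases j <;> simp [coe_L, coe_T, Matrix.mul_apply, Fin.sum_univ_two]

def ρ : BraidGroup3 →* SL(2, ℤ) :=
  PresentedGroup.toGroup (f := ![T, L]) fun r hr => by
    rw [braidRel3, Set.mem_singleton_iff] at hr
    subst hr
    simp only [map_mul, map_inv, FreeGroup.lift_apply_of, Matrix.cons_val_zero,
      Matrix.cons_val_one]
    rw [T_mul_L_mul_T]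
    group

lemma ρ_σ (i : Fin 2) : ρ (σ i) = ![T, L] i := PresentedGroup.toGroup.of _

lemma coe_ρ_Δ : (ρ Δ : Matrix (Fin 2) (Fin 2) ℤ) = !![0, 1; -1, 0] := by
  simp [Δ, ρ_σ, coe_L, coe_T]

lemma coe_ρ_σ_mul_σ : (ρ (σ 0 * σ 1) : Matrix (Fin 2) (Fin 2) ℤ) = !![0, 1; -1, 1] := by
  simp [ρ_σ, coe_L, coe_T]

lemma coe_ρ_σ_mul_σ_sq :
    (ρ ((σ 0 * σ 1) ^ 2) : Matrix (Fin 2) (Fin 2) ℤ) = !![-1, 1; -1, 0] := by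
  simp [ρ_σ, coe_L, coe_T, pow_two]

lemma ρ_Δsq : ρ Δsq = -1 := by
  ext i j
  fin_cases i <;> fin_cases j <;> simp [Δsq, pow_succ, ρ_σ, coe_L, coe_T]

lemma eq_one_or_eq_neg_one_of_commute {g : SL(2, ℤ)} (hT : Commute g (T ^ 2))
    (hL : Commute g (L ^ 2)) : g = 1 ∨ g = -1 := by
  have hdet : g 0 0 * g 1 1 - g 0 1 * g 1 0 = 1 := by
    rw [← Matrix.det_fin_two, g.det_coe]
  have hT2 : ((T ^ 2 : SL(2, ℤ)) : Matrix (Fin 2) (Fin 2) ℤ) = !![1, 2; 0, 1] := by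
    simpa using coe_T_zpow 2
  have hL2 : ((L ^ 2 : SL(2, ℤ)) : Matrix (Fin 2) (Fin 2) ℤ) = !![1, 0; -2, 1] := by
    rw [Matrix.SpecialLinearGroup.coe_pow, coe_L, pow_two, Matrix.mul_fin_two]
    norm_num
  have hT' := congrArg ((↑) : SL(2, ℤ) → Matrix (Fin 2) (Fin 2) ℤ) hT.eq
  have hL' := congrArg ((↑) : SL(2, ℤ) → Matrix (Fin 2) (Fin 2) ℤ) hL.eq
  rw [Matrix.SpecialLinearGroup.coe_mul, Matrix.SpecialLinearGroup.coe_mul, hT2,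
    Matrix.eta_fin_two (g : Matrix (Fin 2) (Fin 2) ℤ), Matrix.mul_fin_two, Matrix.mul_fin_two] at hT'
  rw [Matrix.SpecialLinearGroup.coe_mul, Matrix.SpecialLinearGroup.coe_mul, hL2,
    Matrix.eta_fin_two (g : Matrix (Fin 2) (Fin 2) ℤ), Matrix.mul_fin_two, Matrix.mul_fin_two] at hL'
  have h00 : g 0 0 * 1 + g 0 1 * 0 = 1 * g 0 0 + 2 * g 1 0 := congrFun (congrFun hT' 0) 0
  have h01 : g 0 0 * 2 + g 0 1 * 1 = 1 * g 0 1 + 2 * g 1 1 := congrFun (congrFun hT' 0) 1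
  have h00' : g 0 0 * 1 + g 0 1 * -2 = 1 * g 0 0 + 0 * g 1 0 := congrFun (congrFun hL' 0) 0
  have hc : g 1 0 = 0 := by omega
  have hd : g 1 1 = g 0 0 := by omega
  have hb : g 0 1 = 0 := by omega
  rw [hb, hd] at hdet
  rcases Int.eq_one_or_neg_one_of_mul_eq_one (by simpa using hdet : g 0 0 * g 0 0 = 1) with ha | ha
  · left; ext i j; fin_cases i <;> fin_cases j <;> simp [ha, hb, hc, hd]
  · right; ext i j; fin_cases i <;> fin_cases j <;> simp [ha, hb, hc, hd]

instance : (zpowers Δsq).Normal := normal_of_le_center (zpowers_le.mpr Δsq_mem_center)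

noncomputable def quotientToPerm : BraidGroup3 ⧸ zpowers Δsq →* Equiv.Perm ℍ :=
  QuotientGroup.lift _ ((MulAction.toPermHom SL(2, ℤ) ℍ).comp ρ) <| zpowers_le.mpr <| by
    ext z
    simp [ρ_Δsq]

lemma quotientToPerm_mk (g : BraidGroup3) (z : ℍ) : quotientToPerm g z = ρ g • z := rfl

lemma re_ρ_Δ_smul_neg {z : ℍ} (hz : 0 < z.re) : (ρ Δ • z).re < 0 := by
  rw [re_smul_eq, coe_ρ_Δ]
  refine div_neg_of_neg_of_pos ?_ (UpperHalfPlane.normSq_denom_pos _ z.im_ne_zero)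
  simpa using hz

lemma re_ρ_σ_mul_σ_smul_pos {z : ℍ} (hz : z.re < 0) : 0 < (ρ (σ 0 * σ 1) • z).re := by
  rw [re_smul_eq, coe_ρ_σ_mul_σ]
  refine div_pos ?_ (UpperHalfPlane.normSq_denom_pos _ z.im_ne_zero)
  norm_num
  linarith

lemma re_ρ_σ_mul_σ_sq_smul_pos {z : ℍ} (hz : z.re < 0) : 0 < (ρ ((σ 0 * σ 1) ^ 2) • z).re := by
  rw [re_smul_eq, coe_ρ_σ_mul_σ_sq]
  refine div_pos ?_ (UpperHalfPlane.normSq_denom_pos _ z.im_ne_zero)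
  norm_num
  nlinarith [z.im_pos]

lemma closure_Δ_σ_mul_σ_eq_top : closure {(Δ : BraidGroup3 ⧸ zpowers Δsq), ↑(σ 0 * σ 1)} = ⊤ := by
  set K := closure {(Δ : BraidGroup3 ⧸ zpowers Δsq), ↑(σ 0 * σ 1)}
  have hΔ : (Δ : BraidGroup3 ⧸ zpowers Δsq) ∈ K := subset_closure (by simp)
  have hr : ((σ 0 * σ 1 : BraidGroup3) : BraidGroup3 ⧸ zpowers Δsq) ∈ K :=
    subset_closure (by simp)
  have hσ₀ : σ 0 ∈ K.comap (QuotientGroup.mk' _) := by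
    have h : σ 0 = (σ 0 * σ 1)⁻¹ * Δ := by rw [Δ]; group
    rw [mem_comap, QuotientGroup.mk'_apply, h, QuotientGroup.mk_mul, QuotientGroup.mk_inv]
    exact mul_mem (inv_mem hr) hΔ
  have hσ₁ : σ 1 ∈ K.comap (QuotientGroup.mk' _) := by
    have h : σ 1 = Δ⁻¹ * (σ 0 * σ 1) ^ 2 := by rw [Δ, pow_two]; group
    rw [mem_comap, QuotientGroup.mk'_apply, h, QuotientGroup.mk_mul, QuotientGroup.mk_inv,
      QuotientGroup.mk_pow]
    exact mul_mem (inv_mem hΔ) (pow_mem hr 2)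
  rw [eq_top_iff]
  rintro q -
  obtain ⟨g, rfl⟩ := QuotientGroup.mk'_surjective _ q
  exact PresentedGroup.generated_by _ _ (Fin.forall_fin_two.mpr ⟨hσ₀, hσ₁⟩) g

lemma quotientToPerm_injective : Function.Injective quotientToPerm := by
  refine quotientToPerm.injective_of_ping_pong (m := 2) (n := 3) two_pos le_rfl ?_ ?_
    closure_Δ_σ_mul_σ_eq_top (X := {z : ℍ | z.re < 0}) (Y := {z | 0 < z.re}) ?_ ?_ ?_ ?_ ?_
  · rw [← QuotientGroup.mk_pow, ← Δsq_eq_Δ_sq, QuotientGroup.eq_one_iff]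
    exact mem_zpowers _
  · rw [← QuotientGroup.mk_pow, QuotientGroup.eq_one_iff]
    exact mem_zpowers _
  · exact ⟨(-1 : ℝ) +ᵥ UpperHalfPlane.I, by simp [UpperHalfPlane.vadd_re]⟩
  · exact ⟨(1 : ℝ) +ᵥ UpperHalfPlane.I, by simp [UpperHalfPlane.vadd_re]⟩
  · exact Set.disjoint_left.mpr fun z (hX : z.re < 0) (hY : 0 < z.re) => lt_asymm hX hY
  · intro k hk hk2 z hz
    obtain rfl : k = 1 := by omega
    exact re_ρ_Δ_smul_neg hz
  · intro k hk hk3 z hz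
    interval_cases k
    · exact re_ρ_σ_mul_σ_smul_pos hz
    · exact re_ρ_σ_mul_σ_sq_smul_pos hz

lemma mem_zpowers_Δsq_of_commute_σ_sq {x : BraidGroup3} (h₀ : Commute x (σ 0 ^ 2))
    (h₁ : Commute x (σ 1 ^ 2)) : x ∈ zpowers Δsq := by
  have hρ : ρ x = 1 ∨ ρ x = -1 := eq_one_or_eq_neg_one_of_commute
    (by simpa [ρ_σ] using h₀.map ρ) (by simpa [ρ_σ] using h₁.map ρ)
  rw [← QuotientGroup.eq_one_iff]
  apply quotientToPerm_injective
  ext z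
  rcases hρ with h | h <;> simp [quotientToPerm_mk, h]

end BraidGroup3

open BraidGroup3 in
/-- The center of the pure braid group `P₃ = ker π` is the cyclic subgroup
generated by the full twist `Δ² = (σ₁σ₂)³`. -/
theorem center_pureBraidGroup3 :
    Subgroup.center πB3.ker = Subgroup.zpowers (⟨Δsq, Δsq_mem_ker⟩ : πB3.ker) := by
  apply le_antisymm
  · intro x hx
    have hcomm (i : Fin 2) : Commute (x : BraidGroup3) (σ i ^ 2) :=
      (congrArg Subtype.val (mem_center_iff.mp hx ⟨_, σ_sq_mem_ker i⟩)).symm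
    obtain ⟨n, hn⟩ := mem_zpowers_iff.mp (mem_zpowers_Δsq_of_commute_σ_sq (hcomm 0) (hcomm 1))
    exact mem_zpowers_iff.mpr ⟨n, Subtype.ext (by simpa using hn)⟩
  · rw [zpowers_le, mem_center_iff]
    exact fun g => Subtype.ext (mem_center_iff.mp Δsq_mem_center g)
end
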